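/- Let A ∈ ℂ^{n1×n2×n3} and G ∈ ℂ^{n2×n1×n3}, and suppose G = M *_c N with M ∈ ℂ^{n2×r×n3} and N ∈ ℂ^{r×n1×n3} such that the tensors M^H *_c M and N *_c N^H are invertible (a C-full rank decomposition of G). If A is invertible along G, then the tensor N *_c A *_c M ∈ ℂ^{r×r×n3} is invertible and A^{∥G} = M *_c (N *_c A *_c M)^{-1} *_c N. -/

import Mathlib

noncomputable section

/-- A third-order tensor: a family of frontal slices. -/
abbrev Tensor (n1 n2 n3 : ℕ) : Type := Fin n3 → Matrix (Fin n1) (Fin n2) ℂ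

namespace Tensor

/-- The block Toeplitz-plus-Hankel matrix `mat(A)` associated to a tensor. -/
def matT {n1 n2 n3 : ℕ} (A : Tensor n1 n2 n3) :
    Matrix (Fin n3 × Fin n1) (Fin n3 × Fin n2) ℂ := fun p q =>
  A ⟨p.1.1 - q.1.1 + (q.1.1 - p.1.1), by
        have h1 := p.1.isLt; have h2 := q.1.isLt; omega⟩ p.2 q.2 +
    (if h : p.1.1 + q.1.1 + 2 ≤ n3 then A ⟨p.1.1 + q.1.1 + 1, by omega⟩ p.2 q.2
     else if h2 : n3 ≤ p.1.1 + q.1.1 then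
       A ⟨2 * n3 - (p.1.1 + q.1.1) - 1, by have h1 := p.1.isLt; omega⟩ p.2 q.2
     else 0)

/-- `ten`, the inverse of `mat` on its range: the slices of a tensor are recovered
from the first block-column of its `mat` by an alternating sum. -/
def tenT {n1 n2 n3 : ℕ} (M : Matrix (Fin n3 × Fin n1) (Fin n3 × Fin n2) ℂ) :
    Tensor n1 n2 n3 := fun i => Matrix.of fun a b =>
  ∑ t : Fin n3, if i.1 ≤ t.1 then (-1 : ℂ) ^ (t.1 - i.1) * M (t, a) (⟨0, i.pos⟩, b) else 0

/-- The C-product of two tensors: the unique tensor whose `mat` is `mat(A) * mat(B)`. -/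
def cmul {n1 n2 l n3 : ℕ} (A : Tensor n1 n2 n3) (B : Tensor n2 l n3) : Tensor n1 l n3 :=
  tenT (matT A * matT B)

/-- The conjugate transpose of a tensor, taken slice-wise. -/
def conjT {n1 n2 n3 : ℕ} (A : Tensor n1 n2 n3) : Tensor n2 n1 n3 := fun i => (A i).conjTranspose

/-- The identity tensor: the tensor whose `mat` is the identity matrix. -/
def idT {n n3 : ℕ} : Tensor n n n3 := fun i => if i.1 = 0 then 1 else 0

/-- A tensor is unitary if `Qᴴ *c Q = Q *c Qᴴ = I`. -/
def Unitary {n n3 : ℕ} (Q : Tensor n n n3) : Prop :=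
  cmul (conjT Q) Q = idT ∧ cmul Q (conjT Q) = idT

/-- `X` is the inverse of the square tensor `B` under the C-product. -/
def IsInverse {n n3 : ℕ} (B X : Tensor n n n3) : Prop :=
  cmul B X = idT ∧ cmul X B = idT

/-- `X` is the Moore-Penrose inverse of `A` under the C-product. -/
def IsMP {n1 n2 n3 : ℕ} (A : Tensor n1 n2 n3) (X : Tensor n2 n1 n3) : Prop :=
  cmul (cmul A X) A = A ∧ cmul (cmul X A) X = X ∧
    conjT (cmul A X) = cmul A X ∧ conjT (cmul X A) = cmul X A

/-- Powers of a square tensor with respect to the C-product. -/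
def cpow {n n3 : ℕ} (A : Tensor n n n3) : ℕ → Tensor n n n3
  | 0 => idT
  | m + 1 => cmul (cpow A m) A

/-- `ind(A) = k`: `k` is the smallest nonnegative integer with
`rank(mat(A)^k) = rank(mat(A)^(k+1))`. -/
def IsIndex {n n3 : ℕ} (A : Tensor n n n3) (k : ℕ) : Prop :=
  (matT A ^ k).rank = (matT A ^ (k + 1)).rank ∧
    ∀ j < k, (matT A ^ j).rank ≠ (matT A ^ (j + 1)).rank

/-- `X` is the Drazin inverse of `A` (of index `k`) under the C-product. -/
def IsDrazin {n n3 : ℕ} (A : Tensor n n n3) (k : ℕ) (X : Tensor n n n3) : Prop :=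
  cmul (cpow A (k + 1)) X = cpow A k ∧ cmul (cmul X A) X = X ∧ cmul A X = cmul X A

/-- `X` is an inverse of `A` along `G` under the C-product. -/
def IsInvAlong {n1 n2 n3 : ℕ} (A : Tensor n1 n2 n3) (G X : Tensor n2 n1 n3) : Prop :=
  cmul (cmul X A) G = G ∧ cmul (cmul G A) X = G ∧
    (∃ U : Tensor n1 n1 n3, X = cmul G U) ∧
    (∃ V : Tensor n2 n2 n3, conjT X = cmul (conjT G) V)

/-- All frontal slices are diagonal. -/
def FDiag {n1 n2 n3 : ℕ} (A : Tensor n1 n2 n3) : Prop :=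
  ∀ (i : Fin n3) (a : Fin n1) (b : Fin n2), (a : ℕ) ≠ (b : ℕ) → A i a b = 0

/-- All frontal slices are upper triangular. -/
def FUpper {n1 n2 n3 : ℕ} (A : Tensor n1 n2 n3) : Prop :=
  ∀ (i : Fin n3) (a : Fin n1) (b : Fin n2), (b : ℕ) < (a : ℕ) → A i a b = 0

/-- All frontal slices are lower triangular. -/
def FLower {n1 n2 n3 : ℕ} (A : Tensor n1 n2 n3) : Prop :=
  ∀ (i : Fin n3) (a : Fin n1) (b : Fin n2), (a : ℕ) < (b : ℕ) → A i a b = 0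

/-- Slice-wise 2×2 block tensor `[[A, B],[C, D]]`. -/
def blockT {r s t u n3 : ℕ} (A : Tensor r t n3) (B : Tensor r u n3)
    (C : Tensor s t n3) (D : Tensor s u n3) : Tensor (r + s) (t + u) n3 := fun i =>
  Matrix.reindex finSumFinEquiv finSumFinEquiv (Matrix.fromBlocks (A i) (B i) (C i) (D i))

/-- The mode-3 product of a tensor with an `n3 × n3` matrix. -/
def mode3 {n1 n2 n3 : ℕ} (A : Tensor n1 n2 n3) (M : Matrix (Fin n3) (Fin n3) ℂ) :
    Tensor n1 n2 n3 := fun l => ∑ i, M l i • A i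

end Tensor

open Tensor

/-!
`mat` is injective (`ten` inverts it) and turns the C-product, the conjugate transpose and `I`
into the matrix product, the conjugate transpose and `1`, so the claim is one about matrices.
There `M` has the left inverse `(MᴴM)⁻¹Mᴴ` and `N` the right inverse `Nᴴ(NNᴴ)⁻¹`. Cancelling
them from `X A G = G = G A X` gives `X A M = M` and `N A X = N`, and with `X = G U = Vᴴ G` one
checks that `N U A Vᴴ M` is a two-sided inverse of `N A M` and `M (N U A Vᴴ M) N = X A X = X`.

That `mat` is multiplicative is the real work. Extend the slices to an even function on
`ZMod (2 n3)` vanishing at `n3`; then `mat A` is the block Toeplitz-plus-Hankel matrix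
`(i, j) ↦ a (i - j) + a (i + j + 1)`, and the product of two such matrices is the one of the
cyclic convolution. The convolution need not vanish at `n3`, but since `i - j` and `i + j + 1`
have opposite parity, subtracting a multiple of `(-1) ^ d` repairs this without changing the
matrix.
-/

open Finset Matrix

theorem Finset.sum_Ico_neg_one_pow_mul_add {R : Type*} [CommRing R] (f : ℕ → R) {i n : ℕ}
    (h : i ≤ n) :
    ∑ t ∈ Ico i n, (-1) ^ (t - i) * (f t + f (t + 1)) = f i - (-1) ^ (n - i) * f n := by
  induction n, h using Nat.le_induction with
  | base => simp
  | succ n hin ih =>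
    rw [sum_Ico_succ_top hin, ih, Nat.sub_add_comm hin, pow_succ]
    ring

namespace ZMod

theorem sum_eq_sum_range {m : ℕ} [NeZero m] {M : Type*} [AddCommMonoid M] (f : ZMod m → M) :
    ∑ z, f z = ∑ s ∈ range m, f s := by
  symm
  apply sum_nbij' (fun s : ℕ => (s : ZMod m)) ZMod.val
  · exact fun _ _ => mem_univ _
  · exact fun z _ => mem_range.2 z.val_lt
  · exact fun s hs => ZMod.val_cast_of_lt (mem_range.1 hs)
  · exact fun z _ => ZMod.natCast_zmod_val z
  · exact fun _ _ => rfl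

variable {n : ℕ} {R : Type*} [CommRing R]

theorem natAbs_valMinAbs_natCast {k : ℕ} (hk : k < 2 * n) :
    ((k : ZMod (2 * n))).valMinAbs.natAbs = min k (2 * n - k) := by
  have : NeZero (2 * n) := ⟨by omega⟩
  rw [ZMod.valMinAbs_natAbs_eq_min, ZMod.val_natCast, Nat.mod_eq_of_lt hk]

theorem natCast_add_self_eq_zero : (n : ZMod (2 * n)) + n = 0 := by
  rw [← Nat.cast_add, ← two_mul, ZMod.natCast_self]

theorem neg_one_pow_val_natCast (k : ℕ) : (-1 : R) ^ (k : ZMod (2 * n)).val = (-1) ^ k := by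
  rw [ZMod.val_natCast, neg_one_pow_eq_pow_mod_two, Nat.mod_mod_of_dvd _ (dvd_mul_right 2 n),
    ← neg_one_pow_eq_pow_mod_two]

section

variable [NeZero n]

theorem sum_eq_sum_fin_add_neg_one_sub {M : Type*} [AddCommMonoid M] (f : ZMod (2 * n) → M) :
    ∑ z, f z = ∑ k : Fin n, (f k + f (-1 - k)) := by
  have hreflect : ∀ s ∈ range n, ((n + (n - 1 - s) : ℕ) : ZMod (2 * n)) = -1 - s := by
    intro s hs
    have h : ((n + (n - 1 - s) + 1 + s : ℕ) : ZMod (2 * n)) = 0 := by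
      rw [show n + (n - 1 - s) + 1 + s = 2 * n by simp at hs; omega, ZMod.natCast_self]
    push_cast at h ⊢
    linear_combination h
  rw [ZMod.sum_eq_sum_range, show range (2 * n) = range (n + n) by rw [two_mul], sum_range_add,
    ← sum_range_reflect (fun s => f ((n + s : ℕ) : ZMod (2 * n))),
    sum_congr rfl fun s hs => congrArg f (hreflect s hs), ← sum_add_distrib,
    Fin.sum_univ_eq_sum_range (fun s => f s + f (-1 - s))]

theorem neg_one_pow_val_add (d e : ZMod (2 * n)) :
    (-1 : R) ^ (d + e).val = (-1) ^ d.val * (-1) ^ e.val := by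
  have h := neg_one_pow_val_natCast (n := n) (R := R) (d.val + e.val)
  rwa [Nat.cast_add, ZMod.natCast_zmod_val, ZMod.natCast_zmod_val, pow_add] at h

theorem neg_one_pow_val_neg (d : ZMod (2 * n)) : (-1 : R) ^ (-d).val = (-1) ^ d.val := by
  have hcancel : (-1 : R) ^ (-d).val * (-1) ^ d.val = 1 := by
    rw [← neg_one_pow_val_add, neg_add_cancel, ZMod.val_zero, pow_zero]
  have hsq : (-1 : R) ^ d.val * (-1) ^ d.val = 1 := by
    rw [← mul_pow, neg_one_mul, neg_neg, one_pow]
  linear_combination (-1 : R) ^ d.val * hcancel - (-1 : R) ^ (-d).val * hsq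

end

end ZMod

namespace Matrix

variable {m n r α : Type*} [Fintype m] [Fintype n] [Fintype r] [DecidableEq r] [CommRing α]

theorem inverseAlong_of_fullRankFactorization {A : Matrix m n α} {M : Matrix n r α}
    {N : Matrix r m α} {L : Matrix r n α} {R : Matrix m r α} (hL : L * M = 1) (hR : N * R = 1)
    {X : Matrix n m α} {U : Matrix m m α} {V : Matrix n n α}
    (hXA : X * A * (M * N) = M * N) (hAX : M * N * A * X = M * N)
    (hU : X = M * N * U) (hV : X = V * (M * N)) :
    N * U * A * V * M * (N * A * M) = 1 ∧ N * A * M * (N * U * A * V * M) = 1 ∧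
      M * (N * U * A * V * M) * N = X := by
  have hXAM : X * A * M = M :=
    mul_left_injective_of_inv N R hR (by simpa only [Matrix.mul_assoc] using hXA)
  have hNAX : N * A * X = N :=
    mul_right_injective_of_inv L M hL (by simpa only [Matrix.mul_assoc] using hAX)
  have hXAX : X * A * X = X :=
    calc X * A * X = X * A * (M * N * U) := by rw [← hU]
      _ = X * A * (M * N) * U := by simp only [Matrix.mul_assoc]
      _ = X := by rw [hXA, ← hU]
  have hNUAM : N * U * A * M = 1 := mul_right_injective_of_inv L M hL <|
    calc M * (N * U * A * M) = M * N * U * A * M := by simp only [Matrix.mul_assoc]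
      _ = M * (1 : Matrix r r α) := by rw [← hU, hXAM, Matrix.mul_one]
  have hNAVM : N * A * V * M = 1 := mul_left_injective_of_inv N R hR <|
    calc N * A * V * M * N = N * A * (V * (M * N)) := by simp only [Matrix.mul_assoc]
      _ = (1 : Matrix r r α) * N := by rw [← hV, hNAX, Matrix.one_mul]
  refine ⟨?_, ?_, ?_⟩
  · calc N * U * A * V * M * (N * A * M) = N * U * A * (V * (M * N) * A * M) := by
          simp only [Matrix.mul_assoc]
      _ = 1 := by rw [← hV, hXAM, hNUAM]
  · calc N * A * M * (N * U * A * V * M) = N * A * (M * N * U) * A * V * M := by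
          simp only [Matrix.mul_assoc]
      _ = 1 := by rw [← hU, hNAX, hNAVM]
  · calc M * (N * U * A * V * M) * N = M * N * U * A * (V * (M * N)) := by
          simp only [Matrix.mul_assoc]
      _ = X := by rw [← hU, ← hV, hXAX]

end Matrix

namespace Tensor

variable {n1 n2 l n3 : ℕ}

def pad (A : Tensor n1 n2 n3) (s : ℕ) : Matrix (Fin n1) (Fin n2) ℂ :=
  if h : s < n3 then A ⟨s, h⟩ else 0

theorem pad_of_lt (A : Tensor n1 n2 n3) {s : ℕ} (h : s < n3) : pad A s = A ⟨s, h⟩ := dif_pos h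

theorem pad_of_le (A : Tensor n1 n2 n3) {s : ℕ} (h : n3 ≤ s) : pad A s = 0 := dif_neg (by omega)

theorem matT_apply_zero_right (A : Tensor n1 n2 n3) (t : Fin n3) (h : 0 < n3) (a : Fin n1)
    (b : Fin n2) :
    matT A (t, a) (⟨0, h⟩, b) = pad A t a b + pad A (t + 1) a b := by
  have ht := t.isLt
  simp only [matT, pad, dif_pos ht, add_zero, Nat.sub_zero, Nat.zero_sub]
  congr 1
  split_ifs <;> first | rfl | omega

theorem tenT_matT (A : Tensor n1 n2 n3) : tenT (matT A) = A := by
  ext i a b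
  have hi := i.isLt
  simp only [tenT, Matrix.of_apply, matT_apply_zero_right]
  rw [Fin.sum_univ_eq_sum_range (fun t => if i.1 ≤ t then
      (-1 : ℂ) ^ (t - i.1) * (pad A t a b + pad A (t + 1) a b) else 0), ← sum_filter,
    show (range n3).filter (i.1 ≤ ·) = Ico i.1 n3 by ext; simp; omega,
    sum_Ico_neg_one_pow_mul_add (fun s => pad A s a b) hi.le, pad_of_le A le_rfl, pad_of_lt A hi]
  simp

theorem matT_injective : Function.Injective (matT : Tensor n1 n2 n3 → _) :=
  Function.LeftInverse.injective tenT_matT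

theorem matT_idT {n : ℕ} : matT (idT : Tensor n n n3) = 1 := by
  ext ⟨i, a⟩ ⟨j, b⟩
  simp only [matT, idT, Matrix.one_apply, Prod.mk.injEq, Fin.ext_iff]
  split_ifs <;> simp_all [Matrix.one_apply, Fin.ext_iff] <;> omega

theorem matT_conjT (A : Tensor n1 n2 n3) : matT (conjT A) = (matT A)ᴴ := by
  ext ⟨i, a⟩ ⟨j, b⟩
  simp only [matT, conjT, Matrix.conjTranspose_apply, star_add, Nat.add_comm (j : ℕ) i]
  congr 1
  · congr 2; ext; simp only; omega
  · split_ifs <;> first | rfl | omega | simp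

def extT (A : Tensor n1 n2 n3) (d : ZMod (2 * n3)) : Matrix (Fin n1) (Fin n2) ℂ :=
  pad A d.valMinAbs.natAbs

theorem extT_neg (A : Tensor n1 n2 n3) (d : ZMod (2 * n3)) : extT A (-d) = extT A d := by
  rw [extT, extT, ZMod.natAbs_valMinAbs_neg]

def toeplitzHankel (C : ZMod (2 * n3) → Matrix (Fin n1) (Fin n2) ℂ) :
    Matrix (Fin n3 × Fin n1) (Fin n3 × Fin n2) ℂ := fun p q =>
  (C (((p.1 : ℕ) : ZMod (2 * n3)) - ((q.1 : ℕ) : ZMod (2 * n3))) +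
    C (((p.1 : ℕ) : ZMod (2 * n3)) + ((q.1 : ℕ) : ZMod (2 * n3)) + 1)) p.2 q.2

theorem matT_eq_toeplitzHankel (A : Tensor n1 n2 n3) : matT A = toeplitzHankel (extT A) := by
  ext ⟨⟨i, hi⟩, a⟩ ⟨⟨j, hj⟩, b⟩
  have hToeplitz : ((i : ZMod (2 * n3)) - (j : ZMod (2 * n3))).valMinAbs.natAbs =
      i - j + (j - i) := by
    rcases le_total j i with h | h
    · rw [← Nat.cast_sub h, ZMod.natAbs_valMinAbs_natCast (by omega)]; omega
    · rw [← neg_sub, ← Nat.cast_sub h, ZMod.natAbs_valMinAbs_neg,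
        ZMod.natAbs_valMinAbs_natCast (by omega)]
      omega
  have hHankel : ((i : ZMod (2 * n3)) + (j : ZMod (2 * n3)) + 1).valMinAbs.natAbs =
      min (i + j + 1) (2 * n3 - (i + j + 1)) := by
    rw [← ZMod.natAbs_valMinAbs_natCast (k := i + j + 1) (by omega)]; push_cast; rfl
  simp only [matT, toeplitzHankel, extT, Matrix.add_apply, hToeplitz, hHankel,
    pad_of_lt A (by omega : i - j + (j - i) < n3)]
  congr 1
  split_ifs with h1 h2
  · rw [pad_of_lt A (by omega)]; congr 3; omega
  · rw [pad_of_lt A (by omega)]; congr 3; omega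
  · rw [pad_of_le A (by omega)]; rfl

section Convolution

variable [NeZero n3]

def conv (C : ZMod (2 * n3) → Matrix (Fin n1) (Fin n2) ℂ)
    (D : ZMod (2 * n3) → Matrix (Fin n2) (Fin l) ℂ) (d : ZMod (2 * n3)) :
    Matrix (Fin n1) (Fin l) ℂ :=
  ∑ z, C (d - z) * D z

variable {C : ZMod (2 * n3) → Matrix (Fin n1) (Fin n2) ℂ}
  {D : ZMod (2 * n3) → Matrix (Fin n2) (Fin l) ℂ}

theorem sum_mul_add_eq_conv (x y : ZMod (2 * n3)) :
    ∑ z, C (x - z) * D (z + y) = conv C D (x + y) :=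
  Fintype.sum_equiv (Equiv.addRight y) _ _ fun z => by
    rw [Equiv.coe_addRight, add_sub_add_right_eq_sub]

theorem conv_neg (hC : ∀ d, C (-d) = C d) (hD : ∀ d, D (-d) = D d) (d : ZMod (2 * n3)) :
    conv C D (-d) = conv C D d :=
  Fintype.sum_equiv (Equiv.neg _) _ _ fun z => by
    rw [Equiv.neg_apply, hD, show d - -z = -(-d - z) by ring, hC]

theorem toeplitzHankel_mul (hD : ∀ d, D (-d) = D d) :
    toeplitzHankel C * toeplitzHankel D = toeplitzHankel (conv C D) := by
  ext ⟨i, a⟩ ⟨j, b⟩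
  set x : ZMod (2 * n3) := ((i : ℕ) : ZMod (2 * n3))
  set y : ZMod (2 * n3) := ((j : ℕ) : ZMod (2 * n3))
  -- pairing `k` with `-1 - k` turns the sum over `Fin n3` into two full cyclic convolutions
  have hsum : ∑ k : Fin n3, (C (x - k) + C (x + k + 1)) * (D (k - y) + D (k + y + 1)) =
      conv C D (x - y) + conv C D (x + y + 1) := by
    rw [sub_eq_add_neg x y, add_assoc x y, ← sum_mul_add_eq_conv x (-y),
      ← sum_mul_add_eq_conv x (y + 1), ZMod.sum_eq_sum_fin_add_neg_one_sub,
      ZMod.sum_eq_sum_fin_add_neg_one_sub, ← sum_add_distrib]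
    refine sum_congr rfl fun k _ => ?_
    rw [show x - (-1 - k) = x + k + 1 by ring, show -1 - k + -y = -(k + y + 1) by ring,
      show -1 - k + (y + 1) = -(k - y) by ring, hD, hD, ← sub_eq_add_neg,
      ← add_assoc ((k : ℕ) : ZMod (2 * n3))]
    simp only [Matrix.add_mul, Matrix.mul_add]
    abel
  simp only [Matrix.mul_apply, Fintype.sum_prod_type, toeplitzHankel]
  rw [← hsum, Matrix.sum_apply]
  simp only [Matrix.mul_apply]
  rfl

theorem toeplitzHankel_sub_neg_one_pow_smul (C : ZMod (2 * n3) → Matrix (Fin n1) (Fin n2) ℂ)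
    (K : Matrix (Fin n1) (Fin n2) ℂ) :
    toeplitzHankel (fun d => C d - (-1 : ℂ) ^ (d + n3).val • K) = toeplitzHankel C := by
  ext ⟨i, a⟩ ⟨j, b⟩
  have hsign : (-1 : ℂ) ^ (((i : ℕ) : ZMod (2 * n3)) - (j : ℕ) + n3).val +
      (-1 : ℂ) ^ (((i : ℕ) : ZMod (2 * n3)) + (j : ℕ) + 1 + n3).val = 0 := by
    rw [show ((i : ℕ) : ZMod (2 * n3)) + (j : ℕ) + 1 + n3 =
        ((i : ℕ) : ZMod (2 * n3)) - (j : ℕ) + n3 + ((2 * j + 1 : ℕ) : ZMod (2 * n3)) by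
      push_cast; ring]
    generalize ((i : ℕ) : ZMod (2 * n3)) - (j : ℕ) + n3 = s
    rw [ZMod.neg_one_pow_val_add, ZMod.neg_one_pow_val_natCast, pow_succ, pow_mul]
    simp
  simp only [toeplitzHankel, Matrix.add_apply, Matrix.sub_apply, Matrix.smul_apply, smul_eq_mul]
  linear_combination -K a b * hsign

theorem extT_of_even {E : ZMod (2 * n3) → Matrix (Fin n1) (Fin n2) ℂ} (hE : ∀ d, E (-d) = E d)
    (hEn : E n3 = 0) : extT (fun s : Fin n3 => E (s : ℕ)) = E := by
  funext d
  have hcast := ZMod.natCast_natAbs_valMinAbs d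
  by_cases h : d.valMinAbs.natAbs < n3
  · rw [extT, pad_of_lt _ h, hcast]
    split_ifs
    exacts [rfl, hE d]
  · have hle := ZMod.natAbs_valMinAbs_le d
    rw [extT, pad_of_le _ (not_lt.1 h)]
    rw [show d.valMinAbs.natAbs = n3 by omega] at hcast
    split_ifs at hcast
    · rw [← hcast, hEn]
    · rw [← hE, ← hcast, hEn]

theorem matT_mul_matT_mem_range (A : Tensor n1 n2 n3) (B : Tensor n2 l n3) :
    matT A * matT B ∈ Set.range matT := by
  set P := conv (extT A) (extT B)
  have hP : ∀ d, P (-d) = P d := conv_neg (extT_neg A) (extT_neg B)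
  set E := fun d => P d - (-1 : ℂ) ^ (d + n3).val • P n3
  have hE : ∀ d, E (-d) = E d := fun d => by
    have hshift : -d + n3 = -(d + n3) := by linear_combination ZMod.natCast_add_self_eq_zero
    simp only [E, hP, hshift, ZMod.neg_one_pow_val_neg]
  have hEn : E n3 = 0 := by
    simp only [E]
    rw [ZMod.natCast_add_self_eq_zero, ZMod.val_zero, pow_zero, one_smul, sub_self]
  refine ⟨fun s => E (s : ℕ), ?_⟩
  rw [matT_eq_toeplitzHankel, extT_of_even hE hEn, toeplitzHankel_sub_neg_one_pow_smul,
    matT_eq_toeplitzHankel, matT_eq_toeplitzHankel, toeplitzHankel_mul (extT_neg B)]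

end Convolution

theorem matT_cmul (A : Tensor n1 n2 n3) (B : Tensor n2 l n3) :
    matT (cmul A B) = matT A * matT B := by
  rcases eq_zero_or_neZero n3 with rfl | _
  · exact Subsingleton.elim _ _
  · obtain ⟨C, hC⟩ := matT_mul_matT_mem_range A B
    rw [cmul, ← hC, tenT_matT]

end Tensor

theorem stmt19 {n1 n2 r n3 : ℕ} (A : Tensor n1 n2 n3) (G : Tensor n2 n1 n3)
    (M : Tensor n2 r n3) (N : Tensor r n1 n3)
    (hG : G = cmul M N)
    (hM : ∃ W, IsInverse (cmul (conjT M) M) W)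
    (hN : ∃ W, IsInverse (cmul N (conjT N)) W)
    (hinv : ∃ X, IsInvAlong A G X) :
    ∃ W, IsInverse (cmul (cmul N A) M) W ∧
      IsInvAlong A G (cmul (cmul M W) N) := by
  obtain ⟨X, hX⟩ := hinv
  obtain ⟨hXA, hAX, ⟨U, hU⟩, ⟨V, hV⟩⟩ := id hX
  obtain ⟨W₁, -, hW₁⟩ := hM
  obtain ⟨W₂, hW₂, -⟩ := hN
  obtain ⟨hleft, hright, hX_eq⟩ := inverseAlong_of_fullRankFactorization
    (L := matT W₁ * (matT M)ᴴ) (R := (matT N)ᴴ * matT W₂) (U := matT U) (V := (matT V)ᴴ)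
    (by simpa [matT_cmul, matT_conjT, matT_idT, Matrix.mul_assoc] using congrArg matT hW₁)
    (by simpa [matT_cmul, matT_conjT, matT_idT, Matrix.mul_assoc] using congrArg matT hW₂)
    (by simpa [matT_cmul, hG] using congrArg matT hXA)
    (by simpa [matT_cmul, hG] using congrArg matT hAX)
    (by simpa [matT_cmul, hG] using congrArg matT hU)
    (by simpa [matT_cmul, matT_conjT, hG] using congrArg (fun T => (matT T)ᴴ) hV)
  set W := cmul (cmul (cmul (cmul N U) A) (conjT V)) M
  have hMWN : cmul (cmul M W) N = X :=
    matT_injective (by simpa [W, matT_cmul, matT_conjT] using hX_eq)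
  refine ⟨W, ⟨?_, ?_⟩, hMWN ▸ hX⟩
  · exact matT_injective (by simpa [W, matT_cmul, matT_conjT, matT_idT] using hright)
  · exact matT_injective (by simpa [W, matT_cmul, matT_conjT, matT_idT] using hleft)
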